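/- Let (Br_j)_{j≥0} be a sequence of finite nonempty sets with Br_0 = {v_0} a singleton and let {A^(j)} be a projective matrix system over (Br_j) such that A^(j)_{v,w} > 0 for all j ≥ 1 and all (v,w) ∈ Br_{j-1} × Br_j. If ∑_{j=1}^∞ √(φ(A^(j))) = ∞, then the map lim_j A^(j) ∋ (ψ^j)_{j≥0} ↦ ψ^0 is an affine homeomorphism from lim_j A^(j) onto [0,∞). -/

import Mathlib

open scoped BigOperators
noncomputable section

open Classical in
/-- The matrix product `(A^(1) A^(2) ⋯ A^(k))_{v,w}`; here `A n` is the matrix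
`A^(n+1)` of a projective matrix system, from level `n` to level `n+1`. -/
def pathMat {L : ℕ → Type} [∀ n, Fintype (L n)]
    (A : ∀ n, L n → L (n+1) → ℝ) : ∀ k, L 0 → L k → ℝ
  | 0, v, w => if v = w then 1 else 0
  | (k+1), v, w => ∑ u, pathMat A k v u * A k u w

/-- The inverse limit `lim_j A^(j)` of a projective matrix system. -/
def InvLimit {L : ℕ → Type} [∀ n, Fintype (L n)]
    (A : ∀ n, L n → L (n+1) → ℝ) : Set (∀ n, L n → ℝ) :=
  {ψ | (∀ n v, 0 ≤ ψ n v) ∧ ∀ n v, ψ n v = ∑ w, A n v w * ψ (n+1) w}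

/-- A projective matrix system: nonnegative entries and
`(A^(1) ⋯ A^(k))_{v₀,w} ≠ 0` for all `k` and `w`. -/
def IsProjSystem {L : ℕ → Type} [∀ n, Fintype (L n)] (v0 : L 0)
    (A : ∀ n, L n → L (n+1) → ℝ) : Prop :=
  (∀ n v w, 0 ≤ A n v w) ∧ ∀ k (w : L k), pathMat A k v0 w ≠ 0


/-- `φ(B)` for a strictly positive matrix `B`:
the minimum of `B_{x,y} B_{x',y'} / (B_{x',y} B_{x,y'})`. -/
def phi {X Y : Type} [Fintype X] [Fintype Y] (B : X → Y → ℝ) : ℝ :=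
  ⨅ q : (X × X) × Y × Y, B q.1.1 q.2.1 * B q.1.2 q.2.2 / (B q.1.2 q.2.1 * B q.1.1 q.2.2)

/-!
A matrix with positive entries contracts the Hilbert projective metric `d` on positive vectors
(Birkhoff): `tanh (d / 4)` shrinks by the factor `(1 - √φ) / (1 + √φ) ≤ exp (-√φ)`. For two positive
points of the inverse limit, `tanh (d / 4)` at level `n` is therefore at most
`exp (-∑_{n ≤ j < N} √φ (A j))` for every `N`, which tends to `0` as the series diverges; so the
points are proportional at every level, and equal once their top coordinates agree. As the entries
are positive, a point of the inverse limit vanishing at one vertex vanishes identically, so the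
inverse limit is a single ray. It is not `{0}`: the normalized nonnegative solutions of the first
`n` equations, bounded since `pathMat A k v₀ w * ψ k w ≤ ψ 0 v₀`, form a decreasing sequence of
nonempty compact sets.
-/

open Finset

lemma birkhoff_two_by_two {a b s A₁ A₂ B₁ B₂ : ℝ} (hs₀ : 0 ≤ s) (hs₁ : s ≤ 1) (hb : 0 ≤ b)
    (hba : b ≤ a) (hA₁ : 0 ≤ A₁) (hA₂ : 0 ≤ A₂) (hB₁ : 0 ≤ B₁) (hB₂ : 0 ≤ B₂)
    (hcross : s ^ 2 * (A₁ * B₂) ≤ B₁ * A₂) :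
    (s * a + b) ^ 2 * ((a ^ 2 * A₁ + b ^ 2 * A₂) * (B₁ + B₂)) ≤
      (a + s * b) ^ 2 * ((a ^ 2 * B₁ + b ^ 2 * B₂) * (A₁ + A₂)) := by
  have ha : 0 ≤ a := hb.trans hba
  -- AM-GM, using `(a²A₁B₁)(b²A₂B₂) = a²b²(A₁B₂)(A₂B₁) ≥ (s a b A₁B₂)²`
  have hamgm : 2 * (s * a * b * (A₁ * B₂)) ≤ a ^ 2 * (A₁ * B₁) + b ^ 2 * (A₂ * B₂) := by
    have hsq : (2 * (s * a * b * (A₁ * B₂))) ^ 2 ≤ (a ^ 2 * (A₁ * B₁) + b ^ 2 * (A₂ * B₂)) ^ 2 := by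
      nlinarith [sq_nonneg (a ^ 2 * (A₁ * B₁) - b ^ 2 * (A₂ * B₂)),
        mul_le_mul_of_nonneg_left hcross (by positivity : 0 ≤ a ^ 2 * b ^ 2 * (A₁ * B₂))]
    exact (pow_le_pow_iff_left₀ (by positivity) (by positivity) two_ne_zero).1 hsq
  have key : (a + s * b) ^ 2 * ((a ^ 2 * B₁ + b ^ 2 * B₂) * (A₁ + A₂)) -
      (s * a + b) ^ 2 * ((a ^ 2 * A₁ + b ^ 2 * A₂) * (B₁ + B₂)) =
      (a ^ 2 - b ^ 2) * ((1 - s ^ 2) * (a ^ 2 * (A₁ * B₁) + b ^ 2 * (A₂ * B₂)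
        - 2 * (s * a * b * (A₁ * B₂))) +
          (a ^ 2 + b ^ 2 + 2 * s * a * b) * (B₁ * A₂ - s ^ 2 * (A₁ * B₂))) := by
    ring
  have hab : 0 ≤ a ^ 2 - b ^ 2 := by nlinarith
  have h1s : 0 ≤ 1 - s ^ 2 := by nlinarith
  nlinarith [mul_nonneg hab (add_nonneg (mul_nonneg h1s (sub_nonneg.2 hamgm))
    (mul_nonneg (by positivity : 0 ≤ a ^ 2 + b ^ 2 + 2 * s * a * b) (sub_nonneg.2 hcross)))]

section rows

variable {ι : Type*} [Fintype ι]

lemma sq_mul_dotProduct_mul_le {p q u v : ι → ℝ} {s : ℝ} (hu : 0 ≤ u) (hv : 0 ≤ v)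
    (hcross : ∀ i j, s ^ 2 * (p i * q j) ≤ q i * p j) :
    s ^ 2 * ((p ⬝ᵥ u) * (q ⬝ᵥ v)) ≤ (q ⬝ᵥ u) * (p ⬝ᵥ v) := by
  simp only [dotProduct]
  rw [sum_mul_sum, sum_mul_sum, mul_sum]
  simp only [mul_sum]
  refine sum_le_sum fun i _ => sum_le_sum fun j _ => ?_
  nlinarith [mul_le_mul_of_nonneg_right (hcross i j) (mul_nonneg (hu i) (hv j))]

lemma birkhoff_two_rows {p q x y : ι → ℝ} {a b s : ℝ} (hp : 0 ≤ p)
    (hq : 0 ≤ q) (hs₀ : 0 ≤ s) (hs₁ : s ≤ 1) (hb : 0 ≤ b) (hba : b ≤ a)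
    (hlo : b ^ 2 • y ≤ x) (hhi : x ≤ a ^ 2 • y)
    (hcross : ∀ i j, s ^ 2 * (p i * q j) ≤ q i * p j) :
    (s * a + b) ^ 2 * ((p ⬝ᵥ x) * (q ⬝ᵥ y)) ≤ (a + s * b) ^ 2 * ((q ⬝ᵥ x) * (p ⬝ᵥ y)) := by
  rcases hba.eq_or_lt with rfl | hlt
  · have hx : x = b ^ 2 • y := le_antisymm hhi hlo
    simp only [hx, dotProduct_smul, smul_eq_mul]
    exact le_of_eq (by ring)
  -- `x` and `y` are combinations of the nonnegative vectors `x₁ = x - b²y` and `x₂ = a²y - x`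
  set x₁ := x - b ^ 2 • y
  set x₂ := a ^ 2 • y - x
  have hx₁ : 0 ≤ x₁ := sub_nonneg.2 hlo
  have hx₂ : 0 ≤ x₂ := sub_nonneg.2 hhi
  have hxs : (a ^ 2 - b ^ 2) • x = a ^ 2 • x₁ + b ^ 2 • x₂ := by
    simp only [x₁, x₂, smul_sub, sub_smul, smul_smul]; module
  have hys : (a ^ 2 - b ^ 2) • y = x₁ + x₂ := by
    simp only [x₁, x₂, sub_smul]; abel
  have hdot : ∀ r : ι → ℝ, (a ^ 2 - b ^ 2) * (r ⬝ᵥ x) = a ^ 2 * (r ⬝ᵥ x₁) + b ^ 2 * (r ⬝ᵥ x₂) ∧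
      (a ^ 2 - b ^ 2) * (r ⬝ᵥ y) = r ⬝ᵥ x₁ + r ⬝ᵥ x₂ := fun r => by
    constructor
    · rw [← smul_eq_mul, ← dotProduct_smul, hxs, dotProduct_add, dotProduct_smul, dotProduct_smul]
      rfl
    · rw [← smul_eq_mul, ← dotProduct_smul, hys, dotProduct_add]
  have hcore := birkhoff_two_by_two hs₀ hs₁ hb hba (dotProduct_nonneg_of_nonneg hp hx₁)
    (dotProduct_nonneg_of_nonneg hp hx₂) (dotProduct_nonneg_of_nonneg hq hx₁)
    (dotProduct_nonneg_of_nonneg hq hx₂) (sq_mul_dotProduct_mul_le hx₁ hx₂ hcross)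
  rw [← (hdot p).1, ← (hdot p).2, ← (hdot q).1, ← (hdot q).2] at hcore
  have hd : 0 < (a ^ 2 - b ^ 2) ^ 2 :=
    pow_pos (sub_pos.2 (pow_lt_pow_left₀ hlt hb two_ne_zero)) 2
  refine le_of_mul_le_mul_left ?_ hd
  linear_combination hcore

end rows

section phi

variable {X Y : Type} [Fintype X] [Fintype Y] {B : X → Y → ℝ}

lemma phi_le (B : X → Y → ℝ) (x x' : X) (y y' : Y) :
    phi B ≤ B x y * B x' y' / (B x' y * B x y') :=
  ciInf_le (Set.finite_range _).bddBelow ((x, x'), (y, y'))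

lemma phi_nonneg (hB : ∀ x y, 0 ≤ B x y) : 0 ≤ phi B :=
  Real.iInf_nonneg fun _ => div_nonneg (mul_nonneg (hB _ _) (hB _ _)) (mul_nonneg (hB _ _) (hB _ _))

lemma phi_mul_le (hB : ∀ x y, 0 < B x y) (x x' : X) (y y' : Y) :
    phi B * (B x' y * B x y') ≤ B x y * B x' y' :=
  (le_div_iff₀ (mul_pos (hB _ _) (hB _ _))).1 (phi_le B x x' y y')

lemma phi_le_one [Nonempty X] [Nonempty Y] (hB : ∀ x y, 0 < B x y) : phi B ≤ 1 := by
  inhabit X; inhabit Y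
  simpa [div_self (mul_pos (hB default default) (hB default default)).ne'] using
    phi_le B default default default default

end phi

section ratio

variable {X : Type*} [Fintype X] [Nonempty X] {f g : X → ℝ}

def minRatio (f g : X → ℝ) : ℝ := univ.inf' univ_nonempty fun x => f x / g x

def maxRatio (f g : X → ℝ) : ℝ := univ.sup' univ_nonempty fun x => f x / g x

/-- `tanh (d / 4)`, where `d = log (maxRatio f g / minRatio f g)` is the Hilbert projective
distance between `f` and `g`. -/
def ratioGap (f g : X → ℝ) : ℝ :=
  (√(maxRatio f g) - √(minRatio f g)) / (√(maxRatio f g) + √(minRatio f g))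

lemma minRatio_le_maxRatio : minRatio f g ≤ maxRatio f g :=
  (inf'_le _ (mem_univ (Classical.arbitrary X))).trans (le_sup' (fun x => f x / g x) (mem_univ _))

lemma minRatio_pos (hf : ∀ x, 0 < f x) (hg : ∀ x, 0 < g x) : 0 < minRatio f g :=
  (lt_inf'_iff _).2 fun x _ => div_pos (hf x) (hg x)

lemma minRatio_smul_le (hg : ∀ x, 0 < g x) : minRatio f g • g ≤ f := fun x =>
  (le_div_iff₀ (hg x)).1 (inf'_le (fun x => f x / g x) (mem_univ x))

lemma le_maxRatio_smul (hg : ∀ x, 0 < g x) : f ≤ maxRatio f g • g := fun x =>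
  (div_le_iff₀ (hg x)).1 (le_sup' (fun x => f x / g x) (mem_univ x))

lemma exists_eq_minRatio_mul (hg : ∀ x, 0 < g x) : ∃ x, f x = minRatio f g * g x := by
  obtain ⟨x, -, hx⟩ := exists_mem_eq_inf' univ_nonempty fun x => f x / g x
  exact ⟨x, by rw [minRatio, hx, div_mul_cancel₀ _ (hg x).ne']⟩

lemma exists_eq_maxRatio_mul (hg : ∀ x, 0 < g x) : ∃ x, f x = maxRatio f g * g x := by
  obtain ⟨x, -, hx⟩ := exists_mem_eq_sup' univ_nonempty fun x => f x / g x
  exact ⟨x, by rw [maxRatio, hx, div_mul_cancel₀ _ (hg x).ne']⟩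

lemma ratioGap_nonneg : 0 ≤ ratioGap f g :=
  div_nonneg (sub_nonneg.2 (Real.sqrt_le_sqrt minRatio_le_maxRatio)) (by positivity)

lemma ratioGap_le_one : ratioGap f g ≤ 1 :=
  div_le_one_of_le₀ (by linarith [Real.sqrt_nonneg (minRatio f g)]) (by positivity)

lemma eq_minRatio_smul_of_ratioGap_eq_zero (hf : ∀ x, 0 < f x) (hg : ∀ x, 0 < g x)
    (h : ratioGap f g = 0) : f = minRatio f g • g := by
  have hm := minRatio_pos hf hg
  have hsqrt : √(maxRatio f g) = √(minRatio f g) := by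
    have := (div_eq_zero_iff.1 h).resolve_right (by positivity)
    linarith
  have hMm : maxRatio f g = minRatio f g := by
    rw [← Real.sq_sqrt hm.le, ← hsqrt, Real.sq_sqrt (hm.trans_le minRatio_le_maxRatio).le]
  exact le_antisymm (hMm ▸ le_maxRatio_smul hg) (minRatio_smul_le hg)

end ratio

lemma dotProduct_pos_of_pos {ι : Type*} [Fintype ι] [Nonempty ι] {p y : ι → ℝ}
    (hp : ∀ i, 0 < p i) (hy : ∀ i, 0 < y i) : 0 < p ⬝ᵥ y :=
  sum_pos (fun i _ => mul_pos (hp i) (hy i)) univ_nonempty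

section contraction

variable {X Y : Type} [Fintype X] [Fintype Y] [Nonempty X] [Nonempty Y] {B : X → Y → ℝ}
  {x y : Y → ℝ}

lemma mul_sqrt_maxRatio_dotProduct_le (hB : ∀ i j, 0 < B i j) (hx : ∀ j, 0 < x j)
    (hy : ∀ j, 0 < y j) :
    (√(phi B) * √(maxRatio x y) + √(minRatio x y)) *
        √(maxRatio (fun i => B i ⬝ᵥ x) (fun i => B i ⬝ᵥ y)) ≤
      (√(maxRatio x y) + √(phi B) * √(minRatio x y)) *
        √(minRatio (fun i => B i ⬝ᵥ x) (fun i => B i ⬝ᵥ y)) := by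
  have hφ := phi_nonneg fun i j => (hB i j).le
  have hm := minRatio_pos hx hy
  have hM := hm.trans_le minRatio_le_maxRatio
  have hBy := fun i => dotProduct_pos_of_pos (hB i) hy
  have hm' := minRatio_pos (fun i => dotProduct_pos_of_pos (hB i) hx) hBy
  have hM' := hm'.trans_le minRatio_le_maxRatio
  obtain ⟨u, hu⟩ := exists_eq_maxRatio_mul (f := fun i => B i ⬝ᵥ x) hBy
  obtain ⟨u', hu'⟩ := exists_eq_minRatio_mul (f := fun i => B i ⬝ᵥ x) hBy
  have hrows := birkhoff_two_rows (p := B u) (q := B u') (x := x) (y := y)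
    (fun j => (hB u j).le) (fun j => (hB u' j).le) (Real.sqrt_nonneg _)
    (Real.sqrt_le_one.2 (phi_le_one hB)) (Real.sqrt_nonneg _)
    (Real.sqrt_le_sqrt minRatio_le_maxRatio)
    (by rw [Real.sq_sqrt hm.le]; exact minRatio_smul_le hy)
    (by rw [Real.sq_sqrt hM.le]; exact le_maxRatio_smul hy)
    (fun i j => by rw [Real.sq_sqrt hφ]; exact phi_mul_le hB u' u i j)
  rw [hu, hu'] at hrows
  refine (pow_le_pow_iff_left₀ (by positivity) (by positivity) two_ne_zero).1 ?_
  rw [mul_pow, mul_pow, Real.sq_sqrt hM'.le, Real.sq_sqrt hm'.le]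
  have hprod := mul_pos (hBy u) (hBy u')
  nlinarith

theorem ratioGap_dotProduct_le (hB : ∀ i j, 0 < B i j) (hx : ∀ j, 0 < x j) (hy : ∀ j, 0 < y j) :
    ratioGap (fun i => B i ⬝ᵥ x) (fun i => B i ⬝ᵥ y) ≤
      (1 - √(phi B)) / (1 + √(phi B)) * ratioGap x y := by
  have h := mul_sqrt_maxRatio_dotProduct_le hB hx hy
  have hm := Real.sqrt_pos.2 (minRatio_pos hx hy)
  have hm' := Real.sqrt_pos.2 (minRatio_pos (fun i => dotProduct_pos_of_pos (hB i) hx)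
    fun i => dotProduct_pos_of_pos (hB i) hy)
  have hs := Real.sqrt_nonneg (phi B)
  rw [ratioGap, ratioGap, div_mul_div_comm, div_le_div_iff₀ (by positivity) (by positivity)]
  linear_combination 2 * h

end contraction

section decay

open Filter Topology

lemma one_sub_div_one_add_le_exp_neg {s : ℝ} (hs : 0 ≤ s) : (1 - s) / (1 + s) ≤ Real.exp (-s) := by
  rw [div_le_iff₀ (by linarith)]
  nlinarith [Real.add_one_le_exp (-s), Real.exp_pos (-s)]

variable {t s : ℕ → ℝ}

lemma le_exp_neg_sum_mul (ht : ∀ n, 0 ≤ t n) (hs : ∀ n, 0 ≤ s n)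
    (hstep : ∀ n, t n ≤ (1 - s n) / (1 + s n) * t (n + 1)) {k n : ℕ} (hkn : k ≤ n) :
    t k ≤ Real.exp (-∑ j ∈ Ico k n, s j) * t n := by
  induction n, hkn using Nat.le_induction with
  | base => simp
  | succ n hkn ih =>
    calc t k ≤ Real.exp (-∑ j ∈ Ico k n, s j) * t n := ih
      _ ≤ Real.exp (-∑ j ∈ Ico k n, s j) * (Real.exp (-s n) * t (n + 1)) := by
        gcongr
        exact (hstep n).trans
          (mul_le_mul_of_nonneg_right (one_sub_div_one_add_le_exp_neg (hs n)) (ht _))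
      _ = Real.exp (-∑ j ∈ Ico k (n + 1), s j) * t (n + 1) := by
        rw [sum_Ico_succ_top hkn, neg_add, Real.exp_add, mul_assoc]

lemma eq_zero_of_le_contraction (ht₀ : ∀ n, 0 ≤ t n) (ht₁ : ∀ n, t n ≤ 1)
    (hs : ∀ n, 0 ≤ s n) (hdiv : ¬ Summable s)
    (hstep : ∀ n, t n ≤ (1 - s n) / (1 + s n) * t (n + 1)) (k : ℕ) : t k = 0 := by
  have hsum : Tendsto (fun n => ∑ j ∈ range n, s j - ∑ j ∈ range k, s j) atTop atTop :=
    tendsto_atTop_add_const_right _ _ ((not_summable_iff_tendsto_nat_atTop_of_nonneg hs).1 hdiv)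
  have hbound : ∀ᶠ n in atTop, t k ≤ Real.exp (-(∑ j ∈ range n, s j - ∑ j ∈ range k, s j)) := by
    filter_upwards [eventually_ge_atTop k] with n hkn
    rw [← sum_Ico_eq_sub _ hkn]
    exact (le_exp_neg_sum_mul ht₀ hs hstep hkn).trans
      (mul_le_of_le_one_right (Real.exp_pos _).le (ht₁ n))
  exact le_antisymm (ge_of_tendsto (Real.tendsto_exp_neg_atTop_nhds_zero.comp hsum) hbound)
    (ht₀ k)

end decay

namespace InvLimit

variable {L : ℕ → Type} [∀ n, Fintype (L n)] {A : ∀ n, L n → L (n+1) → ℝ}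
  {ψ ψ' : ∀ n, L n → ℝ}

lemma eq_dotProduct (hψ : ψ ∈ InvLimit A) (n : ℕ) : ψ n = fun v => A n v ⬝ᵥ ψ (n + 1) :=
  funext (hψ.2 n)

lemma smul_mem {c : ℝ} (hc : 0 ≤ c) (hψ : ψ ∈ InvLimit A) : c • ψ ∈ InvLimit A :=
  ⟨fun n v => mul_nonneg hc (hψ.1 n v), fun n v => by
    simp only [Pi.smul_apply, smul_eq_mul, hψ.2 n v, mul_sum, mul_left_comm]⟩

lemma eq_zero_of_le (hψ : ψ ∈ InvLimit A) {m : ℕ} (h : ψ m = 0) {k : ℕ} (hk : k ≤ m) :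
    ψ k = 0 := by
  induction m with
  | zero => rwa [Nat.le_zero.1 hk]
  | succ m ih =>
    rcases hk.eq_or_lt with rfl | hlt
    · exact h
    · exact ih (by funext v; rw [hψ.2 m v, h]; simp) (Nat.le_of_lt_succ hlt)

lemma succ_eq_zero (hpos : ∀ n v w, 0 < A n v w) (hψ : ψ ∈ InvLimit A) {n : ℕ} {v : L n}
    (h : ψ n v = 0) : ψ (n + 1) = 0 := by
  have hsum := (hψ.2 n v).symm.trans h
  funext w
  have := (sum_eq_zero_iff_of_nonneg fun w _ => mul_nonneg (hpos n v w).le (hψ.1 (n + 1) w)).1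
    hsum w (mem_univ w)
  exact (mul_eq_zero.1 this).resolve_left (hpos n v w).ne'

variable [∀ n, Nonempty (L n)]

lemma eq_zero_of_ge (hpos : ∀ n v w, 0 < A n v w) (hψ : ψ ∈ InvLimit A) {m : ℕ} (h : ψ m = 0)
    {k : ℕ} (hk : m ≤ k) : ψ k = 0 := by
  induction k, hk using Nat.le_induction with
  | base => exact h
  | succ k _ ih =>
    exact succ_eq_zero hpos hψ (v := Classical.arbitrary _) (congrFun ih _)

theorem eq_zero_or_pos (hpos : ∀ n v w, 0 < A n v w) (hψ : ψ ∈ InvLimit A) :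
    ψ = 0 ∨ ∀ n v, 0 < ψ n v := by
  by_cases h : ∀ n v, 0 < ψ n v
  · exact Or.inr h
  push Not at h
  obtain ⟨n, v, hnv⟩ := h
  have hsucc := succ_eq_zero hpos hψ (le_antisymm hnv (hψ.1 n v))
  left
  funext k
  rcases le_total k (n + 1) with hk | hk
  · exact eq_zero_of_le hψ hsucc hk
  · exact eq_zero_of_ge hpos hψ hsucc hk

lemma factor_succ_eq_of_eq_smul (hψ : ψ ∈ InvLimit A) (hψ' : ψ' ∈ InvLimit A)
    (hψ'pos : ∀ n v, 0 < ψ' n v) {c : ℕ → ℝ} (hc : ∀ n, ψ n = c n • ψ' n) (n : ℕ) :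
    c (n + 1) = c n := by
  have v : L n := Classical.arbitrary _
  have h : c n * ψ' n v = c (n + 1) * ψ' n v := by
    calc c n * ψ' n v = ψ n v := (congrFun (hc n) v).symm
      _ = A n v ⬝ᵥ (c (n + 1) • ψ' (n + 1)) := by rw [hψ.2 n v, hc (n + 1)]; rfl
      _ = c (n + 1) * ψ' n v := by rw [dotProduct_smul, hψ'.2 n v]; rfl
  exact (mul_right_cancel₀ (hψ'pos n v).ne' h).symm

theorem eq_of_apply_eq (hpos : ∀ n v w, 0 < A n v w) (hdiv : ¬ Summable fun n => √(phi (A n)))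
    (hψ : ψ ∈ InvLimit A) (hψ' : ψ' ∈ InvLimit A) (hψpos : ∀ n v, 0 < ψ n v)
    (hψ'pos : ∀ n v, 0 < ψ' n v) {v₀ : L 0} (h₀ : ψ 0 v₀ = ψ' 0 v₀) : ψ = ψ' := by
  have hgap : ∀ n, ratioGap (ψ n) (ψ' n) = 0 :=
    eq_zero_of_le_contraction (fun _ => ratioGap_nonneg) (fun _ => ratioGap_le_one)
      (fun _ => Real.sqrt_nonneg _) hdiv fun n => by
        have := ratioGap_dotProduct_le (hpos n) (hψpos (n + 1)) (hψ'pos (n + 1))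
        rwa [← eq_dotProduct hψ n, ← eq_dotProduct hψ' n] at this
  set c := fun n => minRatio (ψ n) (ψ' n)
  have hc : ∀ n, ψ n = c n • ψ' n := fun n =>
    eq_minRatio_smul_of_ratioGap_eq_zero (hψpos n) (hψ'pos n) (hgap n)
  have hc₀ : c 0 = 1 := by
    have := congrFun (hc 0) v₀
    rw [Pi.smul_apply, smul_eq_mul, h₀] at this
    exact (mul_eq_right₀ (hψ'pos 0 v₀).ne').1 this.symm
  have hc_one : ∀ n, c n = 1 := fun n => by
    induction n with
    | zero => exact hc₀
    | succ n ih => rw [factor_succ_eq_of_eq_smul hψ hψ' hψ'pos hc, ih]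
  funext n
  rw [hc n, hc_one n, one_smul]

theorem eq_apply_smul (hpos : ∀ n v w, 0 < A n v w) (hdiv : ¬ Summable fun n => √(phi (A n)))
    {χ : ∀ n, L n → ℝ} (hχ : χ ∈ InvLimit A) {v₀ : L 0} (hχ₀ : χ 0 v₀ = 1)
    (hψ : ψ ∈ InvLimit A) : ψ = ψ 0 v₀ • χ := by
  have hχpos := (eq_zero_or_pos hpos hχ).resolve_left fun h => by simp [h] at hχ₀
  rcases eq_zero_or_pos hpos hψ with rfl | hψpos
  · simp
  · exact eq_of_apply_eq hpos hdiv hψ (smul_mem (hψ.1 0 v₀) hχ) hψpos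
      (fun n v => mul_pos (hψpos 0 v₀) (hχpos n v)) (v₀ := v₀) (by simp [hχ₀])

end InvLimit

section existence

variable {L : ℕ → Type} [∀ n, Fintype (L n)] {A : ∀ n, L n → L (n+1) → ℝ}

lemma pathMat_nonneg (hA : ∀ n v w, 0 ≤ A n v w) (k : ℕ) (v : L 0) (w : L k) :
    0 ≤ pathMat A k v w := by
  induction k with
  | zero => unfold pathMat; split_ifs <;> norm_num
  | succ k ih => exact sum_nonneg fun u _ => mul_nonneg (ih u) (hA k u w)

lemma apply_zero_eq_sum_pathMat_mul {ψ : ∀ n, L n → ℝ} {n : ℕ}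
    (hψ : ∀ k < n, ∀ v, ψ k v = ∑ w, A k v w * ψ (k + 1) w) {k : ℕ} (hk : k ≤ n) (v : L 0) :
    ψ 0 v = ∑ w, pathMat A k v w * ψ k w := by
  induction k with
  | zero => classical simp [pathMat]
  | succ k ih =>
    rw [ih (by omega)]
    simp only [pathMat, sum_mul, hψ k (by omega), mul_sum, mul_assoc]
    exact sum_comm

lemma exists_partial_solution (hA : ∀ n v w, 0 ≤ A n v w) (n : ℕ) (f : L n → ℝ)
    (hf : ∀ v, 0 ≤ f v) :
    ∃ ψ : ∀ k, L k → ℝ, (∀ k v, 0 ≤ ψ k v) ∧ ψ n = f ∧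
      (∀ k < n, ∀ v, ψ k v = ∑ w, A k v w * ψ (k + 1) w) ∧ ∀ k, n < k → ψ k = 0 := by
  induction n with
  | zero =>
    refine ⟨Function.update 0 0 f, fun k v => ?_, Function.update_self .., by omega,
      fun k hk => Function.update_of_ne hk.ne' ..⟩
    rcases eq_or_ne k 0 with rfl | hk
    · simpa using hf v
    · simp [Function.update_of_ne hk]
  | succ n ih =>
    obtain ⟨ψ, hψ₀, hψn, hψ, hψ_gt⟩ := ih (fun v => A n v ⬝ᵥ f)
      fun v => dotProduct_nonneg_of_nonneg (hA n v) hf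
    refine ⟨Function.update ψ (n + 1) f, fun k v => ?_, Function.update_self .., fun k hk v => ?_,
      fun k hk => by rw [Function.update_of_ne hk.ne', hψ_gt k (by omega)]⟩
    · rcases eq_or_ne k (n + 1) with rfl | hk
      · simpa using hf v
      · rw [Function.update_of_ne hk]; exact hψ₀ k v
    · rw [Function.update_of_ne hk.ne]
      rcases (Nat.lt_succ_iff.1 hk).eq_or_lt with rfl | hlt
      · rw [Function.update_self, hψn]; rfl
      · rw [Function.update_of_ne (by omega), hψ k hlt v]

lemma pathMat_mul_le {ψ : ∀ n, L n → ℝ} {n : ℕ} (hA : ∀ n v w, 0 ≤ A n v w)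
    (hψ₀ : ∀ k v, 0 ≤ ψ k v) (hψ : ∀ k < n, ∀ v, ψ k v = ∑ w, A k v w * ψ (k + 1) w)
    {k : ℕ} (hk : k ≤ n) (v₀ : L 0) (w : L k) : pathMat A k v₀ w * ψ k w ≤ ψ 0 v₀ := by
  rw [apply_zero_eq_sum_pathMat_mul hψ hk v₀]
  exact single_le_sum (f := fun w => pathMat A k v₀ w * ψ k w)
    (fun w _ => mul_nonneg (pathMat_nonneg hA k v₀ w) (hψ₀ k w)) (mem_univ w)

lemma IsProjSystem.pathMat_pos {v₀ : L 0} (hA : IsProjSystem v₀ A) (k : ℕ) (w : L k) :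
    0 < pathMat A k v₀ w :=
  (pathMat_nonneg hA.1 k v₀ w).lt_of_ne' (hA.2 k w)

variable [∀ n, Nonempty (L n)]

lemma exists_normalized_partial_solution {v₀ : L 0} (hA : IsProjSystem v₀ A) (n : ℕ) :
    ∃ φ : ∀ k, L k → ℝ, (∀ k w, φ k w ∈ Set.Icc 0 (pathMat A k v₀ w)⁻¹) ∧ φ 0 v₀ = 1 ∧
      ∀ k < n, ∀ v, φ k v = ∑ w, A k v w * φ (k + 1) w := by
  obtain ⟨ψ, hψ₀, hψn, hψ, hψ_gt⟩ :=
    exists_partial_solution hA.1 n (fun _ => 1) fun _ => zero_le_one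
  have htop : 0 < ψ 0 v₀ := by
    rw [apply_zero_eq_sum_pathMat_mul hψ le_rfl, hψn]
    exact sum_pos (fun w _ => by simpa using hA.pathMat_pos n w) univ_nonempty
  set φ := (ψ 0 v₀)⁻¹ • ψ
  have hφ₀ : ∀ k v, 0 ≤ φ k v := fun k v => mul_nonneg (inv_pos.2 htop).le (hψ₀ k v)
  have hφ : ∀ k < n, ∀ v, φ k v = ∑ w, A k v w * φ (k + 1) w := fun k hk v => by
    simp only [φ, Pi.smul_apply, smul_eq_mul, hψ k hk v, mul_sum, mul_left_comm]
  have hφtop : φ 0 v₀ = 1 := inv_mul_cancel₀ htop.ne'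
  refine ⟨φ, fun k w => ⟨hφ₀ k w, ?_⟩, hφtop, hφ⟩
  rcases le_or_gt k n with hk | hk
  · rw [← one_div, le_div_iff₀ (hA.pathMat_pos k w), mul_comm, ← hφtop]
    exact pathMat_mul_le hA.1 hφ₀ hφ hk v₀ w
  · simp only [φ, Pi.smul_apply, hψ_gt k hk, smul_zero, Pi.zero_apply]
    exact (inv_pos.2 (hA.pathMat_pos k w)).le

theorem exists_mem_invLimit_apply_eq_one {v₀ : L 0} (hA : IsProjSystem v₀ A) :
    ∃ χ ∈ InvLimit A, χ 0 v₀ = 1 := by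
  let box : Set (∀ k, L k → ℝ) :=
    Set.univ.pi fun k => Set.univ.pi fun w => Set.Icc 0 (pathMat A k v₀ w)⁻¹
  let K : ℕ → Set (∀ k, L k → ℝ) := fun n =>
    box ∩ {ψ | ψ 0 v₀ = 1} ∩ ⋂ k < n, ⋂ v, {ψ | ψ k v = ∑ w, A k v w * ψ (k + 1) w}
  have hbox : IsCompact box :=
    isCompact_univ_pi fun k => isCompact_univ_pi fun w => isCompact_Icc
  have hK_closed : ∀ n, IsClosed (K n) := fun n =>
    (hbox.isClosed.inter (isClosed_eq (by fun_prop) continuous_const)).inter <|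
      isClosed_iInter fun k => isClosed_iInter fun _ => isClosed_iInter fun v =>
        isClosed_eq (by fun_prop) (by fun_prop)
  have hK_nonempty : ∀ n, (K n).Nonempty := fun n => by
    obtain ⟨φ, hφ_box, hφtop, hφ⟩ := exists_normalized_partial_solution hA n
    refine ⟨φ, ⟨fun k _ w _ => hφ_box k w, hφtop⟩, ?_⟩
    simp only [Set.mem_iInter]
    exact hφ
  obtain ⟨χ, hχ⟩ := IsCompact.nonempty_iInter_of_sequence_nonempty_isCompact_isClosed K
    (fun n ψ hψ => ⟨hψ.1, by
      have h := hψ.2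
      simp only [Set.mem_iInter] at h ⊢
      exact fun k hk => h k (by omega)⟩)
    hK_nonempty (hbox.of_isClosed_subset (hK_closed 0) fun ψ hψ => hψ.1.1) hK_closed
  have hχK := Set.mem_iInter.1 hχ
  refine ⟨χ, ⟨fun k v => ((hχK 0).1.1 k trivial v trivial).1, fun k v => ?_⟩, (hχK 0).1.2⟩
  have h := (hχK (k + 1)).2
  simp only [Set.mem_iInter] at h
  exact h k (lt_add_one k) v

end existence

theorem stmt_2_general {L : ℕ → Type} [∀ n, Fintype (L n)] [∀ n, Nonempty (L n)]
    (v0 : L 0)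
    (A : ∀ n, L n → L (n+1) → ℝ) (hA : IsProjSystem v0 A)
    (hpos : ∀ n v w, 0 < A n v w)
    (hdiv : ¬ Summable (fun n => Real.sqrt (phi (A n)))) :
    ∃ e : ↥(InvLimit A) ≃ₜ ↥(Set.Ici (0 : ℝ)),
      ∀ ψ : ↥(InvLimit A), (e ψ : ℝ) = (ψ : ∀ n, L n → ℝ) 0 v0 := by
  obtain ⟨χ, hχ, hχ₀⟩ := exists_mem_invLimit_apply_eq_one hA
  let e : InvLimit A ≃ₜ Set.Ici (0 : ℝ) :=
    { toFun := fun ψ => ⟨ψ.1 0 v0, ψ.2.1 0 v0⟩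
      invFun := fun t => ⟨t.1 • χ, InvLimit.smul_mem t.2 hχ⟩
      left_inv := fun ψ => Subtype.ext (InvLimit.eq_apply_smul hpos hdiv hχ hχ₀ ψ.2).symm
      right_inv := fun t => Subtype.ext (by simp [hχ₀])
      continuous_toFun :=
        ((by fun_prop : Continuous fun ψ : ∀ n, L n → ℝ => ψ 0 v0).comp
          continuous_subtype_val).subtype_mk _
      continuous_invFun := (continuous_subtype_val.smul continuous_const).subtype_mk _ }
  exact ⟨e, fun ψ => rfl⟩

/-- Lemma 3.2: if the matrices have strictly positive entries and
`∑_j √(φ(A^(j))) = ∞`, then the top-coordinate map is an affine homeomorphism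
from the inverse limit onto `[0,∞)`. -/
theorem stmt_2 {L : ℕ → Type} [∀ n, Fintype (L n)] [∀ n, Nonempty (L n)]
    (v0 : L 0) (hsing : ∀ v : L 0, v = v0)
    (A : ∀ n, L n → L (n+1) → ℝ) (hA : IsProjSystem v0 A)
    (hpos : ∀ n v w, 0 < A n v w)
    (hdiv : ¬ Summable (fun n => Real.sqrt (phi (A n)))) :
    ∃ e : ↥(InvLimit A) ≃ₜ ↥(Set.Ici (0 : ℝ)),
      ∀ ψ : ↥(InvLimit A), (e ψ : ℝ) = (ψ : ∀ n, L n → ℝ) 0 v0 :=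
  stmt_2_general v0 A hA hpos hdiv
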